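/- arXiv:2010.01901 — 5 statements merged into one kernel-verified Lean document; each statement's English description precedes it below -/
import Mathlib

section
/- Let f be a nonnegative monotone submodular function and S* a finite set of size k. If each element of S* is independently included in a random subset Z with probability at least p (not necessarily equal probabilities, each at least p), then E[f(Z)] ≥ p · f(S*). -/
/-!
Reveal the elements of `S*` one at a time. Adding `a` to `S` raises `f (Z ∩ S)` by at least
the marginal gain `f (S ∪ {a}) - f S` whenever `a ∈ Z` (submodularity, since `Z ∩ S ⊆ S`), which
happens with probability at least `p`; monotonicity makes that gain nonnegative. Summing over
the elements of `S*` gives `E[f (Z ∩ S*)] ≥ p f(S*) + (1 - p) f(∅)`, and `f(∅) ≥ 0`.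
-/

open Finset

section SamplingLemma

variable {U Ω : Type*} [DecidableEq U] [Fintype Ω]

theorem apply_inter_add_ite_le_apply_inter_insert {f : Finset U → ℝ}
    (hsub : ∀ A B : Finset U, A ⊆ B → ∀ x ∉ B,
      f (insert x A) - f A ≥ f (insert x B) - f B)
    {S : Finset U} {a : U} (ha : a ∉ S) (Z : Finset U) :
    f (Z ∩ S) + (if a ∈ Z then f (insert a S) - f S else 0) ≤ f (Z ∩ insert a S) := by
  split_ifs with haZ
  · rw [inter_insert_of_mem haZ]
    linarith [hsub (Z ∩ S) S inter_subset_right a ha]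
  · rw [inter_insert_of_notMem haZ, add_zero]

theorem add_mul_le_sum_mul_apply_inter_insert {f : Finset U → ℝ}
    (hsub : ∀ A B : Finset U, A ⊆ B → ∀ x ∉ B,
      f (insert x A) - f A ≥ f (insert x B) - f B)
    {w : Ω → ℝ} (hw : ∀ ω, 0 ≤ w ω) (Z : Ω → Finset U) {S : Finset U} {a : U} (ha : a ∉ S) :
    (∑ ω, w ω * f (Z ω ∩ S)) + (∑ ω, if a ∈ Z ω then w ω else 0) * (f (insert a S) - f S)
      ≤ ∑ ω, w ω * f (Z ω ∩ insert a S) := by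
  rw [sum_mul, ← sum_add_distrib]
  gcongr with ω
  have h := mul_le_mul_of_nonneg_left
    (apply_inter_add_ite_le_apply_inter_insert hsub ha (Z ω)) (hw ω)
  split_ifs at h ⊢ <;> linarith

theorem mul_add_mul_le_sum_mul_apply_inter {f : Finset U → ℝ}
    (hmono : ∀ A B : Finset U, A ⊆ B → f A ≤ f B)
    (hsub : ∀ A B : Finset U, A ⊆ B → ∀ x ∉ B,
      f (insert x A) - f A ≥ f (insert x B) - f B)
    {w : Ω → ℝ} (hw : ∀ ω, 0 ≤ w ω) (hw1 : ∑ ω, w ω = 1) (Z : Ω → Finset U) {p : ℝ}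
    (S : Finset U) (hmarg : ∀ a ∈ S, p ≤ ∑ ω, if a ∈ Z ω then w ω else 0) :
    p * f S + (1 - p) * f ∅ ≤ ∑ ω, w ω * f (Z ω ∩ S) := by
  induction S using Finset.induction_on with
  | empty =>
    simp only [inter_empty, ← sum_mul, hw1]
    linarith
  | @insert a S ha ih =>
    have hgain : 0 ≤ f (insert a S) - f S := sub_nonneg.2 (hmono _ _ (subset_insert a S))
    calc p * f (insert a S) + (1 - p) * f ∅
        = (p * f S + (1 - p) * f ∅) + p * (f (insert a S) - f S) := by ring
      _ ≤ (∑ ω, w ω * f (Z ω ∩ S))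
            + (∑ ω, if a ∈ Z ω then w ω else 0) * (f (insert a S) - f S) := by
        gcongr
        · exact ih fun b hb => hmarg b (mem_insert_of_mem hb)
        · exact hmarg a (mem_insert_self a S)
      _ ≤ ∑ ω, w ω * f (Z ω ∩ insert a S) :=
        add_mul_le_sum_mul_apply_inter_insert hsub hw Z ha

end SamplingLemma

theorem sampling_lemma_submodular_general {U : Type*} [DecidableEq U]
    {Ω : Type*} [Fintype Ω]
    (f : Finset U → ℝ)
    (hnonneg : ∀ A, 0 ≤ f A)
    (hmono : ∀ A B : Finset U, A ⊆ B → f A ≤ f B)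
    (hsub : ∀ A B : Finset U, A ⊆ B → ∀ x ∉ B,
      f (insert x A) - f A ≥ f (insert x B) - f B)
    (Sstar : Finset U)
    (w : Ω → ℝ) (hw : ∀ ω, 0 ≤ w ω) (hw1 : ∑ ω, w ω = 1)
    (Z : Ω → Finset U) (hZsub : ∀ ω, Z ω ⊆ Sstar)
    (p : ℝ) (hp1 : p ≤ 1)
    (hmarg : ∀ a ∈ Sstar, (∑ ω, if a ∈ Z ω then w ω else 0) ≥ p) :
    (∑ ω, w ω * f (Z ω)) ≥ p * f Sstar := by
  have h := mul_add_mul_le_sum_mul_apply_inter hmono hsub hw hw1 Z Sstar hmarg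
  simp only [inter_eq_left.2 (hZsub _)] at h
  linarith [mul_nonneg (sub_nonneg.2 hp1) (hnonneg ∅)]

theorem sampling_lemma_submodular {U : Type*} [Fintype U] [DecidableEq U]
    {Ω : Type*} [Fintype Ω]
    (f : Finset U → ℝ)
    (hnonneg : ∀ A, 0 ≤ f A)
    (hmono : ∀ A B : Finset U, A ⊆ B → f A ≤ f B)
    (hsub : ∀ A B : Finset U, A ⊆ B → ∀ x ∉ B,
      f (insert x A) - f A ≥ f (insert x B) - f B)
    (Sstar : Finset U) (k : ℕ) (hk : Sstar.card = k)
    (w : Ω → ℝ) (hw : ∀ ω, 0 ≤ w ω) (hw1 : ∑ ω, w ω = 1)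
    (Z : Ω → Finset U) (hZsub : ∀ ω, Z ω ⊆ Sstar)
    (p : ℝ) (hp0 : 0 ≤ p) (hp1 : p ≤ 1)
    (hmarg : ∀ a ∈ Sstar, (∑ ω, if a ∈ Z ω then w ω else 0) ≥ p)
    (hindep : ∀ T ⊆ Sstar,
      (∑ ω, if T ⊆ Z ω then w ω else 0)
        = ∏ a ∈ T, ∑ ω, if a ∈ Z ω then w ω else 0) :
    (∑ ω, w ω * f (Z ω)) ≥ p * f Sstar :=
  sampling_lemma_submodular_general f hnonneg hmono hsub Sstar w hw hw1 Z hZsub p hp1 hmarg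
end

section
/- Let M be a matroid of rank k, S an independent set in M extended to a basis S′, and S* another basis. Let π : S* → S′ be a Brualdi bijection. If a is drawn from S* with each element having probability at most 1/k of being chosen, then each fixed element e ∈ S has probability at most 1/k of equaling π(a); consequently, for any nonnegative monotone submodular f, E[f(S \ {π(a)})] ≥ (1 − 1/k) f(S). -/
/-!
Since `π` is injective on `S*`, the event `π(a) = e` is the event `a = π⁻¹(e)`, so its probability
is at most `1/k`. For the second claim, the expected loss `E[f(S) - f(S - π(a))]` is a sum of the
marginals `f(S) - f(S - e)` over `e ∈ S`, each weighted by `Pr(π(a) = e) ≤ 1/k`; by submodularity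
these marginals add up to at most `f(S) - f(∅) ≤ f(S)`.
-/

open Finset

/-- `Pr(b = e)` for the finite distribution on `Ω` with weights `w`. -/
def massAt {Ω α : Type*} [Fintype Ω] [DecidableEq α] (w : Ω → ℝ) (b : Ω → α) (e : α) : ℝ :=
  ∑ ω, if b ω = e then w ω else 0

section MassAt

variable {Ω α β : Type*} [Fintype Ω] [DecidableEq α] [DecidableEq β]

lemma massAt_comp_of_injOn {π : α → β} {s : Set α} (hπ : Set.InjOn π s) (w : Ω → ℝ)
    {b : Ω → α} (hb : ∀ ω, b ω ∈ s) {x : α} (hx : x ∈ s) :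
    massAt w (fun ω => π (b ω)) (π x) = massAt w b x :=
  sum_congr rfl fun ω _ => if_congr ⟨fun h => hπ (hb ω) hx h, congrArg π⟩ rfl rfl

lemma massAt_le_of_bijOn {π : α → β} {s : Set α} {t : Set β} (hπ : Set.BijOn π s t)
    (w : Ω → ℝ) {b : Ω → α} (hb : ∀ ω, b ω ∈ s) {c : ℝ} (hc : ∀ x ∈ s, massAt w b x ≤ c)
    {e : β} (he : e ∈ t) :
    massAt w (fun ω => π (b ω)) e ≤ c := by
  obtain ⟨x, hx, rfl⟩ := hπ.surjOn he
  rw [massAt_comp_of_injOn hπ.injOn w hb hx]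
  exact hc x hx

lemma sum_mul_comp_eq_sum_massAt_mul (w : Ω → ℝ) (b : Ω → α) (S : Finset α) {h : α → ℝ}
    (hh : ∀ e ∉ S, h e = 0) :
    ∑ ω, w ω * h (b ω) = ∑ e ∈ S, massAt w b e * h e := by
  have hsplit : ∀ ω, w ω * h (b ω) = ∑ e ∈ S, if b ω = e then w ω * h e else 0 := by
    intro ω
    rw [sum_ite_eq]
    split_ifs with hbS
    · rfl
    · rw [hh _ hbS, mul_zero]
  simp only [hsplit, massAt, sum_mul, ite_mul, zero_mul]
  exact sum_comm

end MassAt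

section Submodular

variable {U : Type*} [DecidableEq U] {f : Finset U → ℝ}

lemma sum_sub_erase_le_sub_empty
    (hsub : ∀ A B : Finset U, A ⊆ B → ∀ x ∉ B,
      f (insert x A) - f A ≥ f (insert x B) - f B)
    (S : Finset U) : ∑ e ∈ S, (f S - f (S.erase e)) ≤ f S - f ∅ := by
  induction S using Finset.induction_on with
  | empty => simp
  | @insert x T hx ih =>
    have hmarginal : ∀ e ∈ T, f (insert x T) - f ((insert x T).erase e)
        ≤ f T - f (T.erase e) := by
      intro e he
      have key := hsub (T.erase e) ((insert x T).erase e)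
        (erase_subset_erase e (subset_insert x T)) e (notMem_erase e _)
      rw [insert_erase he, insert_erase (mem_insert_of_mem he)] at key
      linarith
    rw [sum_insert hx, erase_insert hx]
    linarith [sum_le_sum hmarginal]

theorem sub_mul_le_sum_mul_erase (hempty : 0 ≤ f ∅)
    (hmono : ∀ A B : Finset U, A ⊆ B → f A ≤ f B)
    (hsub : ∀ A B : Finset U, A ⊆ B → ∀ x ∉ B,
      f (insert x A) - f A ≥ f (insert x B) - f B)
    {Ω : Type*} [Fintype Ω] (w : Ω → ℝ) (hw1 : ∑ ω, w ω = 1) (b : Ω → U)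
    {c : ℝ} (hc : 0 ≤ c) (S : Finset U) (hb : ∀ e ∈ S, massAt w b e ≤ c) :
    (1 - c) * f S ≤ ∑ ω, w ω * f (S.erase (b ω)) := by
  have hloss : ∑ ω, w ω * (f S - f (S.erase (b ω))) ≤ c * f S :=
    calc ∑ ω, w ω * (f S - f (S.erase (b ω)))
        = ∑ e ∈ S, massAt w b e * (f S - f (S.erase e)) :=
          sum_mul_comp_eq_sum_massAt_mul w b S (h := fun e => f S - f (S.erase e))
            fun e he => by rw [erase_eq_of_notMem he, sub_self]
      _ ≤ ∑ e ∈ S, c * (f S - f (S.erase e)) := by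
          gcongr with e he
          · exact sub_nonneg.2 (hmono _ _ (erase_subset e S))
          · exact hb e he
      _ = c * ∑ e ∈ S, (f S - f (S.erase e)) := (mul_sum _ _ _).symm
      _ ≤ c * f S := by
          gcongr
          linarith [sum_sub_erase_le_sub_empty hsub S]
  have hexp : ∑ ω, w ω * (f S - f (S.erase (b ω))) = f S - ∑ ω, w ω * f (S.erase (b ω)) := by
    simp only [mul_sub, sum_sub_distrib, ← sum_mul, hw1, one_mul]
  linarith

end Submodular

theorem brualdi_removal_bound_general {U : Type*} [DecidableEq U]
    {Ω : Type*} [Fintype Ω]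
    (k : ℕ)
    (S S' Sstar : Finset U)
    (hSS' : S ⊆ S')
    (π : U → U) (hπ : Set.BijOn π (Sstar : Set U) (S' : Set U))
    (f : Finset U → ℝ)
    (hnonneg : ∀ A, 0 ≤ f A)
    (hmono : ∀ A B : Finset U, A ⊆ B → f A ≤ f B)
    (hsub : ∀ A B : Finset U, A ⊆ B → ∀ x ∉ B,
      f (insert x A) - f A ≥ f (insert x B) - f B)
    (w : Ω → ℝ) (hw1 : ∑ ω, w ω = 1)
    (a : Ω → U) (ha : ∀ ω, a ω ∈ Sstar)
    (hunif : ∀ x ∈ Sstar, (∑ ω, if a ω = x then w ω else 0) ≤ 1/(k : ℝ)) :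
    (∀ e ∈ S, (∑ ω, if π (a ω) = e then w ω else 0) ≤ 1/(k : ℝ))
    ∧ (∑ ω, w ω * f (S.erase (π (a ω)))) ≥ (1 - 1/(k : ℝ)) * f S := by
  have hprob : ∀ e ∈ S, massAt w (fun ω => π (a ω)) e ≤ 1/(k : ℝ) := fun e he =>
    massAt_le_of_bijOn hπ w ha hunif (hSS' he)
  exact ⟨hprob, sub_mul_le_sum_mul_erase (hnonneg ∅) hmono hsub w hw1 _ (by positivity) S hprob⟩

theorem brualdi_removal_bound {U : Type*} [Fintype U] [DecidableEq U]
    {Ω : Type*} [Fintype Ω]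
    (M : Matroid U) (k : ℕ) (hk : 0 < k)
    (S S' Sstar : Finset U)
    (hS : M.Indep (S : Set U)) (hS' : M.IsBase (S' : Set U)) (hSS' : S ⊆ S')
    (hSstar : M.IsBase (Sstar : Set U)) (hcard : Sstar.card = k)
    (π : U → U) (hπ : Set.BijOn π (Sstar : Set U) (S' : Set U))
    (hbru : ∀ x ∈ Sstar, M.Indep (insert x ((S' : Set U) \ {π x})))
    (f : Finset U → ℝ)
    (hnonneg : ∀ A, 0 ≤ f A)
    (hmono : ∀ A B : Finset U, A ⊆ B → f A ≤ f B)
    (hsub : ∀ A B : Finset U, A ⊆ B → ∀ x ∉ B,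
      f (insert x A) - f A ≥ f (insert x B) - f B)
    (w : Ω → ℝ) (hw : ∀ ω, 0 ≤ w ω) (hw1 : ∑ ω, w ω = 1)
    (a : Ω → U) (ha : ∀ ω, a ω ∈ Sstar)
    (hunif : ∀ x ∈ Sstar, (∑ ω, if a ω = x then w ω else 0) ≤ 1/(k : ℝ)) :
    (∀ e ∈ S, (∑ ω, if π (a ω) = e then w ω else 0) ≤ 1/(k : ℝ))
    ∧ (∑ ω, w ω * f (S.erase (π (a ω)))) ≥ (1 - 1/(k : ℝ)) * f S :=
  brualdi_removal_bound_general k S S' Sstar hSS' π hπ f hnonneg hmono hsub w hw1 a ha hunif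
end

section
/- In a p-matchoid given by matroids M_1, …, M_q on ground sets N_1, …, N_q where each element belongs to at most p of the N_i: if for each i, π_i is a Brualdi bijection between (the restriction of) a feasible set S* and an extension of the current solution SH in M_i, and a is drawn from S* with each element chosen with probability at most 1/k, then any fixed element e ∈ SH lies in π(a) := {π_i(a) : a ∈ N_i} with probability at most p/k, and hence E[f(SH \ π(a))] ≥ (1 − p/k) f(SH) for nonnegative monotone submodular f. -/
/-!
Each element `e` of `SH` can only be hit as `π i a` for an index `i` with `e ∈ N i`, of which
there are at most `p`, and for each such `i` injectivity of `π i` leaves a single `a ∈ S*` that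
hits it, an event of probability at most `1/k`; the union bound gives `p/k`. For the expectation,
write `f S` as a telescoping sum of nonnegative marginal gains `c e` along `S`: by submodularity,
removing a random set `X` loses at most `∑_{e ∈ S ∩ X} c e`, whose expectation is at most
`(p/k) ∑ c ≤ (p/k) f S`.
-/

open Finset

section Submodular

variable {U : Type*} [DecidableEq U]

/-- The marginal gains of `f` along any enumeration of `S`. -/
lemma exists_marginal_weights (f : Finset U → ℝ) (hnonneg : ∀ A, 0 ≤ f A)
    (hmono : ∀ A B : Finset U, A ⊆ B → f A ≤ f B)
    (hsub : ∀ A B : Finset U, A ⊆ B → ∀ x ∉ B,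
      f (insert x A) - f A ≥ f (insert x B) - f B)
    (S : Finset U) :
    ∃ c : U → ℝ, (∀ e, 0 ≤ c e) ∧ ∑ e ∈ S, c e ≤ f S ∧
      ∀ X : Finset U, f S - ∑ e ∈ S ∩ X, c e ≤ f (S \ X) := by
  induction S using Finset.induction_on with
  | empty => exact ⟨0, fun _ => le_rfl, by simpa using hnonneg ∅, by simp⟩
  | @insert x S hxS ih =>
    obtain ⟨c, hc0, hcS, hcX⟩ := ih
    set gain := f (insert x S) - f S
    have hgain : 0 ≤ gain := sub_nonneg.mpr (hmono _ _ (subset_insert x S))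
    have hsum (T : Finset U) (hT : T ⊆ S) : ∑ e ∈ T, Function.update c x gain e = ∑ e ∈ T, c e :=
      sum_update_of_notMem (fun h => hxS (hT h)) _ _
    refine ⟨Function.update c x gain, ?_, ?_, fun X => ?_⟩
    · intro e
      rcases eq_or_ne e x with rfl | hne
      · simpa using hgain
      · simpa [hne] using hc0 e
    · rw [sum_insert hxS, hsum S subset_rfl, Function.update_self]
      linarith
    · have hinter := hsum (S ∩ X) inter_subset_left
      have := hcX X
      by_cases hxX : x ∈ X
      · rw [insert_sdiff_of_mem _ hxX, insert_inter_of_mem hxX,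
          sum_insert (fun h => hxS (mem_inter.mp h).1), hinter, Function.update_self]
        linarith
      · rw [insert_sdiff_of_notMem _ hxX, insert_inter_of_notMem hxX, hinter]
        have := hsub (S \ X) S sdiff_subset x hxS
        linarith

variable {Ω : Type*} [Fintype Ω]

lemma one_sub_mul_le_sum_mul_apply_sdiff (f : Finset U → ℝ) (hnonneg : ∀ A, 0 ≤ f A)
    (hmono : ∀ A B : Finset U, A ⊆ B → f A ≤ f B)
    (hsub : ∀ A B : Finset U, A ⊆ B → ∀ x ∉ B,
      f (insert x A) - f A ≥ f (insert x B) - f B)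
    (w : Ω → ℝ) (hw : ∀ ω, 0 ≤ w ω) (hw1 : ∑ ω, w ω = 1) (X : Ω → Finset U) (S : Finset U)
    {r : ℝ} (hr : 0 ≤ r) (hX : ∀ e ∈ S, ∑ ω, (if e ∈ X ω then w ω else 0) ≤ r) :
    (1 - r) * f S ≤ ∑ ω, w ω * f (S \ X ω) := by
  obtain ⟨c, hc0, hcS, hcX⟩ := exists_marginal_weights f hnonneg hmono hsub S
  have hloss (ω : Ω) : ∑ e ∈ S ∩ X ω, c e = ∑ e ∈ S, if e ∈ X ω then c e else 0 := by
    rw [← filter_mem_eq_inter, sum_filter]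
  calc (1 - r) * f S
      = f S - r * f S := by ring
    _ ≤ f S - ∑ e ∈ S, c e * r := by
        rw [← sum_mul]
        nlinarith
    _ ≤ f S - ∑ e ∈ S, c e * ∑ ω, (if e ∈ X ω then w ω else 0) := by
        gcongr with e he
        exacts [hc0 e, hX e he]
    _ = ∑ ω, w ω * (f S - ∑ e ∈ S ∩ X ω, c e) := by
        simp only [hloss, mul_sub, sum_sub_distrib, ← sum_mul, hw1, one_mul, mul_sum]
        rw [sum_comm]
        congr 1
        refine sum_congr rfl fun e _ => sum_congr rfl fun ω _ => ?_
        split_ifs <;> ring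
    _ ≤ ∑ ω, w ω * f (S \ X ω) :=
        sum_le_sum fun ω _ => mul_le_mul_of_nonneg_left (hcX (X ω)) (hw ω)

end Submodular

section WeightedSums

variable {Ω : Type*} [Fintype Ω] {w : Ω → ℝ}

lemma sum_ite_le_sum_sum_ite_of_imp_exists {ι : Type*} (hw : ∀ ω, 0 ≤ w ω) (I : Finset ι)
    (E : Ω → Prop) [DecidablePred E] (P : ι → Ω → Prop) [∀ i, DecidablePred (P i)]
    (hE : ∀ ω, E ω → ∃ i ∈ I, P i ω) :
    ∑ ω, (if E ω then w ω else 0) ≤ ∑ i ∈ I, ∑ ω, if P i ω then w ω else 0 := by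
  rw [sum_comm]
  refine sum_le_sum fun ω _ => ?_
  have hnonneg (i : ι) : 0 ≤ if P i ω then w ω else 0 := by split_ifs <;> simp [hw ω]
  split_ifs with hω
  · obtain ⟨i, hi, hPi⟩ := hE ω hω
    simpa [hPi] using single_le_sum (fun j _ => hnonneg j) hi
  · exact sum_nonneg fun i _ => hnonneg i

lemma sum_ite_mem_and_eq_le_of_injOn {U V : Type*} [DecidableEq U] [DecidableEq V] {a : Ω → U}
    {T s : Finset U} {g : U → V} {r : ℝ} (hw : ∀ ω, 0 ≤ w ω) (hr : 0 ≤ r)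
    (hinj : Set.InjOn g ((T : Set U) ∩ s)) (ha : ∀ ω, a ω ∈ T)
    (hunif : ∀ x ∈ T, (∑ ω, if a ω = x then w ω else 0) ≤ r) (e : V) :
    ∑ ω, (if a ω ∈ s ∧ g (a ω) = e then w ω else 0) ≤ r := by
  by_cases hpre : ∃ x ∈ (T : Set U) ∩ s, g x = e
  · obtain ⟨x, hx, rfl⟩ := hpre
    refine le_trans (sum_le_sum fun ω _ => ?_) (hunif x hx.1)
    split_ifs with hω hax hax
    · exact le_rfl
    · exact absurd (hinj ⟨ha ω, hω.1⟩ hx hω.2) hax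
    · exact hw ω
    · exact le_rfl
  · push Not at hpre
    have hzero (ω : Ω) : ¬(a ω ∈ s ∧ g (a ω) = e) := fun h => hpre _ ⟨ha ω, h.1⟩ h.2
    simpa [hzero] using hr

end WeightedSums

theorem matchoid_removal_bound_general {U : Type*} [DecidableEq U]
    {Ω : Type*} [Fintype Ω]
    (q p k : ℕ)
    (N : Fin q → Finset U)
    (hmatchoid : ∀ x : U, (Finset.univ.filter (fun i : Fin q => x ∈ N i)).card ≤ p)
    (Sstar SH : Finset U)
    (π : Fin q → U → U)
    (hinj : ∀ i, Set.InjOn (π i) ((Sstar : Set U) ∩ (N i : Set U)))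
    (hmaps : ∀ i, Set.MapsTo (π i) ((Sstar : Set U) ∩ (N i : Set U)) (N i : Set U))
    (f : Finset U → ℝ)
    (hnonneg : ∀ A, 0 ≤ f A)
    (hmono : ∀ A B : Finset U, A ⊆ B → f A ≤ f B)
    (hsub : ∀ A B : Finset U, A ⊆ B → ∀ x ∉ B,
      f (insert x A) - f A ≥ f (insert x B) - f B)
    (w : Ω → ℝ) (hw : ∀ ω, 0 ≤ w ω) (hw1 : ∑ ω, w ω = 1)
    (a : Ω → U) (ha : ∀ ω, a ω ∈ Sstar)
    (hunif : ∀ x ∈ Sstar, (∑ ω, if a ω = x then w ω else 0) ≤ 1/(k : ℝ)) :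
    (∀ e ∈ SH,
      (∑ ω, if e ∈ (Finset.univ.filter (fun i : Fin q => a ω ∈ N i)).image
          (fun i => π i (a ω)) then w ω else 0) ≤ (p : ℝ)/(k : ℝ))
    ∧ (∑ ω, w ω * f (SH \ (Finset.univ.filter (fun i : Fin q => a ω ∈ N i)).image
          (fun i => π i (a ω))))
        ≥ (1 - (p : ℝ)/(k : ℝ)) * f SH := by
  have hit (e : U) : (∑ ω, if e ∈ (univ.filter (fun i : Fin q => a ω ∈ N i)).image
      (fun i => π i (a ω)) then w ω else 0) ≤ (p : ℝ) / k := by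
    calc _ ≤ ∑ i ∈ univ.filter (fun i : Fin q => e ∈ N i),
          ∑ ω, (if a ω ∈ N i ∧ π i (a ω) = e then w ω else 0) := by
          refine sum_ite_le_sum_sum_ite_of_imp_exists hw _ _ _ fun ω hω => ?_
          obtain ⟨i, hi, rfl⟩ := mem_image.mp hω
          have hai : a ω ∈ N i := (mem_filter.mp hi).2
          exact ⟨i, mem_filter.mpr ⟨mem_univ i, hmaps i ⟨ha ω, hai⟩⟩, hai, rfl⟩
      _ ≤ ∑ _i ∈ univ.filter (fun i : Fin q => e ∈ N i), 1 / (k : ℝ) :=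
          sum_le_sum fun i _ =>
            sum_ite_mem_and_eq_le_of_injOn hw (by positivity) (hinj i) ha hunif e
      _ ≤ p * (1 / (k : ℝ)) := by
          rw [sum_const, nsmul_eq_mul]
          gcongr
          exact_mod_cast hmatchoid e
      _ = p / k := mul_one_div _ _
  exact ⟨fun e _ => hit e,
    one_sub_mul_le_sum_mul_apply_sdiff f hnonneg hmono hsub w hw hw1 _ SH (by positivity)
      fun e _ => hit e⟩

theorem matchoid_removal_bound {U : Type*} [Fintype U] [DecidableEq U]
    {Ω : Type*} [Fintype Ω]
    (q p k : ℕ) (hp : 1 ≤ p) (hk : 0 < k)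
    (M : Fin q → Matroid U) (N : Fin q → Finset U)
    (hground : ∀ i, (M i).E = (N i : Set U))
    (hmatchoid : ∀ x : U, (Finset.univ.filter (fun i : Fin q => x ∈ N i)).card ≤ p)
    (Sstar SH : Finset U) (hcard : Sstar.card = k)
    (π : Fin q → U → U)
    (hinj : ∀ i, Set.InjOn (π i) ((Sstar : Set U) ∩ (N i : Set U)))
    (hmaps : ∀ i, Set.MapsTo (π i) ((Sstar : Set U) ∩ (N i : Set U)) (N i : Set U))
    (f : Finset U → ℝ)
    (hnonneg : ∀ A, 0 ≤ f A)
    (hmono : ∀ A B : Finset U, A ⊆ B → f A ≤ f B)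
    (hsub : ∀ A B : Finset U, A ⊆ B → ∀ x ∉ B,
      f (insert x A) - f A ≥ f (insert x B) - f B)
    (w : Ω → ℝ) (hw : ∀ ω, 0 ≤ w ω) (hw1 : ∑ ω, w ω = 1)
    (a : Ω → U) (ha : ∀ ω, a ω ∈ Sstar)
    (hunif : ∀ x ∈ Sstar, (∑ ω, if a ω = x then w ω else 0) ≤ 1/(k : ℝ)) :
    (∀ e ∈ SH,
      (∑ ω, if e ∈ (Finset.univ.filter (fun i : Fin q => a ω ∈ N i)).image
          (fun i => π i (a ω)) then w ω else 0) ≤ (p : ℝ)/(k : ℝ))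
    ∧ (∑ ω, w ω * f (SH \ (Finset.univ.filter (fun i : Fin q => a ω ∈ N i)).image
          (fun i => π i (a ω))))
        ≥ (1 - (p : ℝ)/(k : ℝ)) * f SH :=
  matchoid_removal_bound_general q p k N hmatchoid Sstar SH π hinj hmaps f hnonneg hmono hsub w hw
    hw1 a ha hunif
end

section
/- If each element of a set S (with |S| = m) independently remains in a random subset S′ with probability at least 1 − δ, and f is nonnegative monotone submodular, then E[f(S′)] ≥ (1 − δ) f(S). In particular, if an algorithm's solution set S satisfies that each of its elements appears in the shortlist R with probability at least 1 − ε/2 given the configuration, then E[f(S ∩ R)] ≥ (1 − ε/2) E[f(S)]. -/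
/-!
Order `S` and let `g x` be the marginal gain of `x` over its predecessors, so that
`∑ x ∈ S, g x = f S - f ∅`. Monotonicity makes `g ≥ 0`, and submodularity makes
`T ↦ f ∅ + ∑ x ∈ T, g x` a lower bound for `f` on subsets of `S`. The expectation of this
modular minorant over `S'` is `f ∅ + ∑ x ∈ S, g x * Pr(x ∈ S') ≥ f ∅ + (1 - δ) (f S - f ∅)`,
by linearity of expectation.
-/

open Finset

section ModularMinorant

variable {U : Type*} [DecidableEq U] {f : Finset U → ℝ}

theorem exists_modular_minorant (hmono : ∀ A B : Finset U, A ⊆ B → f A ≤ f B)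
    (hsub : ∀ A B : Finset U, A ⊆ B → ∀ x ∉ B,
      f (insert x A) - f A ≥ f (insert x B) - f B)
    (S : Finset U) :
    ∃ g : U → ℝ, (∀ x, 0 ≤ g x) ∧ ∑ x ∈ S, g x = f S - f ∅ ∧
      ∀ T ⊆ S, f ∅ + ∑ x ∈ T, g x ≤ f T := by
  induction S using Finset.induction_on with
  | empty => exact ⟨0, fun _ => le_rfl, by simp, fun T hT => by simp [subset_empty.mp hT]⟩
  | @insert a s ha ih =>
    obtain ⟨g, hg_nonneg, hg_sum, hg_le⟩ := ih
    refine ⟨Function.update g a (f (insert a s) - f s), fun x => ?_, ?_, fun T hT => ?_⟩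
    · rcases eq_or_ne x a with rfl | hx
      · simpa using hmono s (insert x s) (subset_insert x s)
      · simpa [hx] using hg_nonneg x
    · rw [sum_insert ha, Function.update_self, sum_update_of_notMem ha, hg_sum]
      ring
    · by_cases haT : a ∈ T
      · have hT₀ : T.erase a ⊆ s := subset_insert_iff.mp hT
        have hgain := hsub (T.erase a) s hT₀ a ha
        have hbound := hg_le (T.erase a) hT₀
        rw [← insert_erase haT, sum_insert (notMem_erase a T), Function.update_self,
          sum_update_of_notMem (notMem_erase a T)]
        linarith
      · rw [sum_update_of_notMem haT]
        exact hg_le T ((subset_insert_iff_of_notMem haT).mp hT)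

end ModularMinorant

theorem sum_mul_sum_mem_eq_sum_mul_prob {U Ω : Type*} [DecidableEq U] [Fintype Ω]
    (w : Ω → ℝ) (S' : Ω → Finset U) {S : Finset U} (hsubS : ∀ ω, S' ω ⊆ S) (g : U → ℝ) :
    ∑ ω, w ω * ∑ x ∈ S' ω, g x = ∑ x ∈ S, g x * ∑ ω, if x ∈ S' ω then w ω else 0 := by
  calc ∑ ω, w ω * ∑ x ∈ S' ω, g x
      = ∑ ω, ∑ x ∈ S, if x ∈ S' ω then w ω * g x else 0 := by
        refine sum_congr rfl fun ω _ => ?_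
        rw [sum_ite_mem, inter_eq_right.mpr (hsubS ω), mul_sum]
    _ = _ := by
        rw [sum_comm]
        refine sum_congr rfl fun x _ => ?_
        rw [mul_sum]
        refine sum_congr rfl fun ω _ => ?_
        split_ifs <;> ring

theorem retention_sampling_bound_general {U : Type*} [DecidableEq U]
    {Ω : Type*} [Fintype Ω]
    (f : Finset U → ℝ)
    (hnonneg : ∀ A, 0 ≤ f A)
    (hmono : ∀ A B : Finset U, A ⊆ B → f A ≤ f B)
    (hsub : ∀ A B : Finset U, A ⊆ B → ∀ x ∉ B,
      f (insert x A) - f A ≥ f (insert x B) - f B)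
    (S : Finset U) (δ : ℝ) (hδ0 : 0 ≤ δ)
    (w : Ω → ℝ) (hw : ∀ ω, 0 ≤ w ω) (hw1 : ∑ ω, w ω = 1)
    (S' : Ω → Finset U) (hsubS : ∀ ω, S' ω ⊆ S)
    (hmarg : ∀ x ∈ S, (∑ ω, if x ∈ S' ω then w ω else 0) ≥ 1 - δ) :
    (∑ ω, w ω * f (S' ω)) ≥ (1 - δ) * f S := by
  obtain ⟨g, hg_nonneg, hg_sum, hg_le⟩ := exists_modular_minorant hmono hsub S
  have hgain : (1 - δ) * (f S - f ∅) ≤ ∑ x ∈ S, g x * ∑ ω, if x ∈ S' ω then w ω else 0 := by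
    rw [← hg_sum, mul_sum]
    exact sum_le_sum fun x hx => by
      rw [mul_comm]; exact mul_le_mul_of_nonneg_left (hmarg x hx) (hg_nonneg x)
  calc (1 - δ) * f S ≤ f ∅ + (1 - δ) * (f S - f ∅) := by nlinarith [hnonneg ∅]
    _ ≤ f ∅ + ∑ x ∈ S, g x * ∑ ω, if x ∈ S' ω then w ω else 0 := by linarith
    _ = ∑ ω, w ω * (f ∅ + ∑ x ∈ S' ω, g x) := by
        rw [← sum_mul_sum_mem_eq_sum_mul_prob w S' hsubS g]
        simp only [mul_add, sum_add_distrib, ← sum_mul, hw1, one_mul]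
    _ ≤ ∑ ω, w ω * f (S' ω) :=
        sum_le_sum fun ω _ => mul_le_mul_of_nonneg_left (hg_le _ (hsubS ω)) (hw ω)

theorem retention_sampling_bound {U : Type*} [Fintype U] [DecidableEq U]
    {Ω : Type*} [Fintype Ω]
    (f : Finset U → ℝ)
    (hnonneg : ∀ A, 0 ≤ f A)
    (hmono : ∀ A B : Finset U, A ⊆ B → f A ≤ f B)
    (hsub : ∀ A B : Finset U, A ⊆ B → ∀ x ∉ B,
      f (insert x A) - f A ≥ f (insert x B) - f B)
    (S : Finset U) (ε δ : ℝ) (hδ : δ = ε/2) (hδ0 : 0 ≤ δ) (hδ1 : δ < 1)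
    (w : Ω → ℝ) (hw : ∀ ω, 0 ≤ w ω) (hw1 : ∑ ω, w ω = 1)
    (S' : Ω → Finset U) (hsubS : ∀ ω, S' ω ⊆ S)
    (hmarg : ∀ x ∈ S, (∑ ω, if x ∈ S' ω then w ω else 0) ≥ 1 - δ)
    (hindep : ∀ T ⊆ S,
      (∑ ω, if T ⊆ S' ω then w ω else 0)
        = ∏ x ∈ T, ∑ ω, if x ∈ S' ω then w ω else 0) :
    (∑ ω, w ω * f (S' ω)) ≥ (1 - δ) * f S :=
  retention_sampling_bound_general f hnonneg hmono hsub S δ hδ0 w hw hw1 S' hsubS hmarg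
end

section
/- Greedy element bound via optimal set: let f be nonnegative monotone submodular, S* with |S*| ≤ k, and T any set. If an element m is chosen as argmax over a set Z with Pr(i ∈ Z) ≥ 1/k uniformly over i ∈ S* (given Z ≠ ∅, a random element of Z is each i ∈ S* with probability ≥ 1/k), then E[Δ(m | T) | Z ≠ ∅] ≥ (1/k)(f(S*) − f(T)). -/
/-!
Write `Δ i = f (insert i T) - f T` and `q i = Pr(ι = i, Z ≠ ∅)`. Since `m` maximises the
marginal gain over `Z ∋ ι`, `E[Δ m; Z ≠ ∅] ≥ E[Δ ι; Z ≠ ∅] = ∑_{i ∈ S*} Δ i q i`, and the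
uniformity hypothesis gives `q i ≥ Pr(Z ≠ ∅) / k`. Submodularity bounds `∑_{i ∈ S*} Δ i` below
by `f (S* ∪ T) - f T`, and monotonicity by `f S* - f T`.
-/

open Finset

theorem sum_ite_mul_comp_eq_sum_mul_sum_fiber {Ω α R : Type*} [Fintype Ω]
    [DecidableEq α] [CommSemiring R] (p : Ω → Prop) [DecidablePred p] (w : Ω → R) (g : α → R) (ι : Ω → α)
    (S : Finset α) (hι : ∀ ω, p ω → ι ω ∈ S) :
    ∑ ω, (if p ω then w ω * g (ι ω) else 0)
      = ∑ i ∈ S, g i * ∑ ω, if ι ω = i ∧ p ω then w ω else 0 := by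
  simp_rw [mul_sum, mul_ite, mul_zero]
  rw [sum_comm]
  refine sum_congr rfl fun ω _ => ?_
  by_cases hp : p ω
  · simp [hp, hι ω hp, mul_comm]
  · simp [hp]

theorem union_sub_le_sum_insert_sub {U : Type*} [DecidableEq U] (f : Finset U → ℝ)
    (hsub : ∀ A B : Finset U, A ⊆ B → ∀ x ∉ B,
      f (insert x A) - f A ≥ f (insert x B) - f B)
    (S T : Finset U) :
    f (S ∪ T) - f T ≤ ∑ i ∈ S, (f (insert i T) - f T) := by
  induction S using Finset.induction_on with
  | empty => simp
  | @insert a S ha ih =>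
    rw [sum_insert ha, insert_union]
    by_cases haT : a ∈ T
    · rw [insert_eq_of_mem (mem_union_right S haT), insert_eq_of_mem haT, sub_self, zero_add]
      exact ih
    · have := hsub T (S ∪ T) subset_union_right a (by simp [ha, haT])
      linarith

theorem greedy_element_bound_general {U : Type*} [DecidableEq U]
    {Ω : Type*} [Fintype Ω]
    (f : Finset U → ℝ)
    (hmono : ∀ A B : Finset U, A ⊆ B → f A ≤ f B)
    (hsub : ∀ A B : Finset U, A ⊆ B → ∀ x ∉ B,
      f (insert x A) - f A ≥ f (insert x B) - f B)
    (k : ℕ)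
    (Sstar T : Finset U)
    (w : Ω → ℝ) (hw : ∀ ω, 0 ≤ w ω)
    (Z : Ω → Finset U) (hZ : ∀ ω, Z ω ⊆ Sstar)
    (m ι : Ω → U)
    (hι : ∀ ω, (Z ω).Nonempty → ι ω ∈ Z ω)
    (hm : ∀ ω, ∀ x ∈ Z ω,
      f (insert (m ω) T) - f T ≥ f (insert x T) - f T)
    (hPrB : 0 < ∑ ω, if (Z ω).Nonempty then w ω else 0)
    (hunif : ∀ i ∈ Sstar,
      (∑ ω, if ι ω = i ∧ (Z ω).Nonempty then w ω else 0)
          / (∑ ω, if (Z ω).Nonempty then w ω else 0) ≥ 1/(k : ℝ)) :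
    (∑ ω, if (Z ω).Nonempty then w ω * (f (insert (m ω) T) - f T) else 0)
        / (∑ ω, if (Z ω).Nonempty then w ω else 0)
      ≥ (1/(k : ℝ)) * (f Sstar - f T) := by
  set P := ∑ ω, if (Z ω).Nonempty then w ω else 0
  have hΔ : ∀ i, 0 ≤ f (insert i T) - f T := fun i =>
    sub_nonneg.2 (hmono _ _ (subset_insert i T))
  have hq : ∀ i ∈ Sstar,
      1 / (k : ℝ) * P ≤ ∑ ω, if ι ω = i ∧ (Z ω).Nonempty then w ω else 0 :=
    fun i hi => (le_div_iff₀ hPrB).1 (hunif i hi)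
  have hSstar : f Sstar - f T ≤ ∑ i ∈ Sstar, (f (insert i T) - f T) :=
    (sub_le_sub_right (hmono _ _ subset_union_left) _).trans
      (union_sub_le_sum_insert_sub f hsub Sstar T)
  rw [ge_iff_le, le_div_iff₀ hPrB]
  calc 1 / (k : ℝ) * (f Sstar - f T) * P
      ≤ ∑ i ∈ Sstar, (f (insert i T) - f T) * (1 / (k : ℝ) * P) := by
        rw [← sum_mul]
        have hc : 0 ≤ 1 / (k : ℝ) * P := by positivity
        linear_combination mul_le_mul_of_nonneg_right hSstar hc
    _ ≤ ∑ i ∈ Sstar, (f (insert i T) - f T) *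
          ∑ ω, if ι ω = i ∧ (Z ω).Nonempty then w ω else 0 :=
        sum_le_sum fun i hi => mul_le_mul_of_nonneg_left (hq i hi) (hΔ i)
    _ = ∑ ω, if (Z ω).Nonempty then w ω * (f (insert (ι ω) T) - f T) else 0 :=
        (sum_ite_mul_comp_eq_sum_mul_sum_fiber _ w (fun i => f (insert i T) - f T) ι Sstar
          fun ω hω => hZ ω (hι ω hω)).symm
    _ ≤ _ := sum_le_sum fun ω _ => by
        split_ifs with hω
        · exact mul_le_mul_of_nonneg_left (hm ω _ (hι ω hω)) (hw ω)
        · rfl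

theorem greedy_element_bound {U : Type*} [Fintype U] [DecidableEq U]
    {Ω : Type*} [Fintype Ω]
    (f : Finset U → ℝ)
    (hnonneg : ∀ A, 0 ≤ f A)
    (hmono : ∀ A B : Finset U, A ⊆ B → f A ≤ f B)
    (hsub : ∀ A B : Finset U, A ⊆ B → ∀ x ∉ B,
      f (insert x A) - f A ≥ f (insert x B) - f B)
    (k : ℕ) (hk : 0 < k)
    (Sstar T : Finset U) (hcard : Sstar.card ≤ k)
    (w : Ω → ℝ) (hw : ∀ ω, 0 ≤ w ω) (hw1 : ∑ ω, w ω = 1)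
    (Z : Ω → Finset U) (hZ : ∀ ω, Z ω ⊆ Sstar)
    (m ι : Ω → U)
    (hι : ∀ ω, (Z ω).Nonempty → ι ω ∈ Z ω)
    (hm : ∀ ω, ∀ x ∈ Z ω,
      f (insert (m ω) T) - f T ≥ f (insert x T) - f T)
    (hPrB : 0 < ∑ ω, if (Z ω).Nonempty then w ω else 0)
    (hunif : ∀ i ∈ Sstar,
      (∑ ω, if ι ω = i ∧ (Z ω).Nonempty then w ω else 0)
          / (∑ ω, if (Z ω).Nonempty then w ω else 0) ≥ 1/(k : ℝ)) :
    (∑ ω, if (Z ω).Nonempty then w ω * (f (insert (m ω) T) - f T) else 0)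
        / (∑ ω, if (Z ω).Nonempty then w ω else 0)
      ≥ (1/(k : ℝ)) * (f Sstar - f T) :=
  greedy_element_bound_general f hmono hsub k Sstar T w hw Z hZ m ι hι hm hPrB hunif
end
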